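/- Let L^ℓ(a,b) be the span of the polynomials R(U) over all partitionings U of {1,...,a+b} into ℓ possibly-empty blocks with exactly a−b blocks of odd cardinality. Then dim L^ℓ(a,b) ≥ dim L^ℓ(a−1,b) + dim L^ℓ(a,b−1) whenever 0 < a−b < ℓ and b > 0. -/

import Mathlib

open MvPolynomial Finset

noncomputable section

/-- `R` of a block `{u_1 < u_2 < … < u_r}`:
`(y_{u_1} - y_{u_2})(y_{u_3} - y_{u_4}) ⋯ (y_{u_{2⌊r/2⌋-1}} - y_{u_{2⌊r/2⌋}})`. -/
def Rblock (B : Finset ℕ) : MvPolynomial ℕ ℂ :=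
  ∏ i ∈ Finset.range (B.card / 2),
    (X ((B.sort (· ≤ ·)).getD (2 * i) 0) - X ((B.sort (· ≤ ·)).getD (2 * i + 1) 0))

/-- `R(U)`: the product of the `R`-polynomials of the blocks of `U`. -/
def RU {l : ℕ} (U : Fin l → Finset ℕ) : MvPolynomial ℕ ℂ :=
  ∏ j, Rblock (U j)

/-- `L^ℓ(a,b)`: the span of the polynomials `R(U)` over all partitionings `U` of
`{1,…,a+b}` (0-based: `{0,…,a+b-1}`) into `ℓ` possibly-empty blocks with exactly
`a - b` blocks of odd cardinality. -/
def Lspace (l a b : ℕ) : Submodule ℂ (MvPolynomial ℕ ℂ) :=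
  Submodule.span ℂ
    {p | ∃ U : Fin l → Finset ℕ,
      (∀ i j, i ≠ j → Disjoint (U i) (U j)) ∧
      Finset.univ.biUnion U = Finset.range (a + b) ∧
      (Finset.univ.filter fun j => Odd (U j).card).card = a - b ∧
      p = RU U}

/-!
Differentiate with respect to the last variable `y_{a+b}` (index `a + b - 1` here). A polynomial
`R(U)` for a partitioning `U` of `{1, …, a+b-1}` does not involve `y_{a+b}`, and adding `a+b` to an
even block of `U` leaves `R(U)` unchanged; hence `L(a-1,b) ⊆ L(a,b) ∩ ker ∂`, using `a - b < ℓ` to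
find an even block. Adding `a+b` to an odd block with largest element `u` multiplies `R(U)` by
`y_u - y_{a+b}`, whose derivative is `-R(U)`; hence `L(a,b-1) ⊆ ∂ L(a,b)`. Rank–nullity for `∂`
restricted to `L(a,b)` gives the inequality.
-/

theorem Finset.sort_insert_of_forall_lt {α : Type*} [LinearOrder α] {s : Finset α} {a : α}
    (h : ∀ x ∈ s, x < a) : (insert a s).sort (· ≤ ·) = s.sort (· ≤ ·) ++ [a] := by
  have hl : (s.sort (· ≤ ·) ++ [a]).toFinset = insert a s := by
    ext; simp
  rw [← hl, List.toFinset_sort]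
  · simpa [List.pairwise_append, Finset.pairwise_sort] using fun x hx => (h x hx).le
  · simpa [List.nodup_append, Finset.sort_nodup] using fun x hx => (h x hx).ne

theorem Finset.getD_sort_mem {α : Type*} [LinearOrder α] {s : Finset α} {i : ℕ}
    (hi : i < s.card) (d : α) : (s.sort (· ≤ ·)).getD i d ∈ s := by
  rw [List.getD_eq_getElem _ _ (by simpa using hi)]
  exact (mem_sort _).1 (List.getElem_mem _)

theorem Rblock_mem_supported (B : Finset ℕ) : Rblock B ∈ supported ℂ (B : Set ℕ) :=
  prod_mem fun i hi => by
    have := mem_range.1 hi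
    exact sub_mem (X_mem_supported.2 (getD_sort_mem (by omega) 0))
      (X_mem_supported.2 (getD_sort_mem (by omega) 0))

theorem Rblock_insert_of_even {B : Finset ℕ} {m : ℕ} (h : ∀ x ∈ B, x < m)
    (he : Even B.card) : Rblock (insert m B) = Rblock B := by
  have hlen := length_sort (· ≤ ·) (s := B)
  obtain ⟨k, hk⟩ := he
  rw [Rblock, Rblock, card_insert_of_notMem fun hm => (h m hm).false, sort_insert_of_forall_lt h,
    show (B.card + 1) / 2 = B.card / 2 by omega]
  refine prod_congr rfl fun i hi => ?_
  have := mem_range.1 hi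
  rw [List.getD_append _ _ _ _ (by omega), List.getD_append _ _ _ _ (by omega)]

theorem Rblock_insert_of_odd {B : Finset ℕ} {m : ℕ} (h : ∀ x ∈ B, x < m)
    (ho : Odd B.card) : ∃ u ∈ B, Rblock (insert m B) = Rblock B * (X u - X m) := by
  have hlen := length_sort (· ≤ ·) (s := B)
  obtain ⟨k, hk⟩ := ho
  refine ⟨(B.sort (· ≤ ·)).getD (2 * k) 0, getD_sort_mem (by omega) 0, ?_⟩
  rw [Rblock, Rblock, card_insert_of_notMem fun hm => (h m hm).false, sort_insert_of_forall_lt h,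
    show (B.card + 1) / 2 = k + 1 by omega, show B.card / 2 = k by omega, prod_range_succ]
  congr 1
  · refine prod_congr rfl fun i hi => ?_
    have := mem_range.1 hi
    rw [List.getD_append _ _ _ _ (by omega), List.getD_append _ _ _ _ (by omega)]
  · rw [List.getD_append _ _ _ _ (by omega), List.getD_append_right _ _ _ _ (by omega),
      show 2 * k + 1 - (B.sort (· ≤ ·)).length = 0 by omega]
    rfl

section Partitions

variable {l : ℕ}

theorem RU_mem_supported (U : Fin l → Finset ℕ) :
    RU U ∈ supported ℂ (univ.biUnion U : Set ℕ) :=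
  prod_mem fun j _ =>
    supported_mono (coe_subset.2 (subset_biUnion_of_mem U (mem_univ j))) (Rblock_mem_supported _)

theorem RU_update_of_Rblock_eq_mul (U : Fin l → Finset ℕ) (j : Fin l) {B : Finset ℕ}
    {c : MvPolynomial ℕ ℂ} (h : Rblock B = Rblock (U j) * c) :
    RU (Function.update U j B) = RU U * c := by
  rw [RU, RU, funext (Function.apply_update (fun _ => Rblock) U j B),
    prod_update_of_mem (mem_univ j), prod_eq_mul_prod_sdiff_singleton_of_mem (mem_univ j), h]
  ring

def IsBlockPartition (U : Fin l → Finset ℕ) (n : ℕ) : Prop :=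
  (∀ i j, i ≠ j → Disjoint (U i) (U j)) ∧ univ.biUnion U = range n

def oddBlocks (U : Fin l → Finset ℕ) : Finset (Fin l) :=
  univ.filter fun j => Odd (U j).card

theorem biUnion_update_insert (U : Fin l → Finset ℕ) (j : Fin l) (n : ℕ) :
    univ.biUnion (Function.update U j (insert n (U j))) = insert n (univ.biUnion U) := by
  ext x
  simp only [mem_biUnion, mem_univ, true_and, mem_insert, Function.update_apply]
  constructor
  · rintro ⟨i, hi⟩
    split_ifs at hi with hij
    · subst hij; rw [mem_insert] at hi; exact hi.imp_right fun hx => ⟨i, hx⟩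
    · exact Or.inr ⟨i, hi⟩
  · rintro (rfl | ⟨i, hi⟩)
    · exact ⟨j, by simp⟩
    · refine ⟨i, ?_⟩
      split_ifs with hij
      · subst hij; exact mem_insert_of_mem hi
      · exact hi

theorem oddBlocks_update_insert_of_even {U : Fin l → Finset ℕ} {j : Fin l} {n : ℕ}
    (hn : n ∉ U j) (he : Even (U j).card) :
    oddBlocks (Function.update U j (insert n (U j))) = insert j (oddBlocks U) := by
  ext i
  rcases eq_or_ne i j with rfl | hij <;>
    simp [oddBlocks, card_insert_of_notMem hn, *]

theorem oddBlocks_update_insert_of_odd {U : Fin l → Finset ℕ} {j : Fin l} {n : ℕ}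
    (hn : n ∉ U j) (ho : Odd (U j).card) :
    oddBlocks (Function.update U j (insert n (U j))) = (oddBlocks U).erase j := by
  ext i
  rcases eq_or_ne i j with rfl | hij <;>
    simp [oddBlocks, card_insert_of_notMem hn, *]

namespace IsBlockPartition

variable {U : Fin l → Finset ℕ} {n : ℕ}

theorem lt (hU : IsBlockPartition U n) {j : Fin l} {x : ℕ} (hx : x ∈ U j) : x < n :=
  mem_range.1 (hU.2 ▸ mem_biUnion.2 ⟨j, mem_univ j, hx⟩)

theorem update_insert (hU : IsBlockPartition U n) (j : Fin l) :
    IsBlockPartition (Function.update U j (insert n (U j))) (n + 1) := by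
  refine ⟨fun i k hik => ?_, by rw [biUnion_update_insert, hU.2, range_add_one]⟩
  have hn : ∀ i, n ∉ U i := fun i hn => (hU.lt hn).false
  simp only [Function.update_apply]
  split_ifs with hi hk hk
  · exact absurd (hi.trans hk.symm) hik
  · subst hi; exact disjoint_insert_left.2 ⟨hn k, hU.1 _ k hik⟩
  · subst hk; exact disjoint_insert_right.2 ⟨hn i, hU.1 i _ hik⟩
  · exact hU.1 i k hik

theorem pderiv_RU (hU : IsBlockPartition U n) : pderiv n (RU U) = 0 :=
  pderiv_eq_zero_of_notMem_vars fun h => by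
    simpa [hU.2] using mem_supported.1 (RU_mem_supported U) h

end IsBlockPartition

end Partitions

section Lspace

variable {l a b : ℕ}

theorem RU_mem_Lspace {U : Fin l → Finset ℕ} (hU : IsBlockPartition U (a + b))
    (hodd : #(oddBlocks U) = a - b) : RU U ∈ Lspace l a b :=
  Submodule.subset_span ⟨U, hU.1, hU.2, hodd, rfl⟩

theorem Lspace_le {P : Submodule ℂ (MvPolynomial ℕ ℂ)}
    (h : ∀ U : Fin l → Finset ℕ,
      IsBlockPartition U (a + b) → #(oddBlocks U) = a - b → RU U ∈ P) :
    Lspace l a b ≤ P :=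
  Submodule.span_le.2 <| by
    rintro _ ⟨U, hdisj, hunion, hodd, rfl⟩
    exact h U ⟨hdisj, hunion⟩ hodd

instance Lspace.finiteDimensional (l a b : ℕ) : FiniteDimensional ℂ (Lspace l a b) := by
  refine FiniteDimensional.span_of_finite ℂ <| (Set.finite_range
    fun V : Fin l → (range (a + b)).powerset => RU fun j => (V j : Finset ℕ)).subset ?_
  rintro _ ⟨U, -, hunion, -, rfl⟩
  exact ⟨fun j => ⟨U j, mem_powerset.2 (hunion ▸ subset_biUnion_of_mem U (mem_univ j))⟩, rfl⟩

theorem Lspace_le_ker_pderiv (l a b : ℕ) :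
    Lspace l a b ≤ LinearMap.ker (pderiv (a + b)).toLinearMap :=
  Lspace_le fun _ hU _ => hU.pderiv_RU

theorem Lspace_le_Lspace_add_one_left (hba : b ≤ a) (hl : a - b < l) :
    Lspace l a b ≤ Lspace l (a + 1) b := by
  refine Lspace_le fun U hU hodd => ?_
  obtain ⟨j, -, hj⟩ := exists_mem_notMem_of_card_lt_card (s := oddBlocks U) (t := univ)
    (by rw [hodd, card_univ, Fintype.card_fin]; exact hl)
  have he : Even (U j).card := by simpa [oddBlocks] using hj
  have hn : a + b ∉ U j := fun hn => (hU.lt hn).false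
  have hRU : RU (Function.update U j (insert (a + b) (U j))) = RU U :=
    (RU_update_of_Rblock_eq_mul U j (c := 1)
      (by rw [Rblock_insert_of_even (fun _ => hU.lt) he, mul_one])).trans (mul_one _)
  rw [← hRU]
  refine RU_mem_Lspace (by rw [add_right_comm]; exact hU.update_insert j) ?_
  rw [oddBlocks_update_insert_of_even hn he, card_insert_of_notMem hj, hodd]
  omega

theorem Lspace_le_map_pderiv (hba : b < a) :
    Lspace l a b ≤ (Lspace l a (b + 1)).map (pderiv (a + b)).toLinearMap := by
  refine Lspace_le fun U hU hodd => ?_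
  obtain ⟨j, hj⟩ : (oddBlocks U).Nonempty := card_pos.1 (by omega)
  have ho : Odd (U j).card := (mem_filter.1 hj).2
  have hn : a + b ∉ U j := fun hn => (hU.lt hn).false
  obtain ⟨u, hu, hR⟩ := Rblock_insert_of_odd (fun _ => hU.lt) ho
  have hV : RU (Function.update U j (insert (a + b) (U j))) ∈ Lspace l a (b + 1) := by
    refine RU_mem_Lspace (by rw [← add_assoc]; exact hU.update_insert j) ?_
    rw [oddBlocks_update_insert_of_odd hn ho, card_erase_of_mem hj, hodd]
    omega
  refine ⟨_, neg_mem hV, ?_⟩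
  rw [map_neg, Derivation.coeFn_coe, RU_update_of_Rblock_eq_mul U j hR,
    pderiv_mul, hU.pderiv_RU, map_sub, pderiv_X_of_ne (hU.lt hu).ne, pderiv_X_self]
  ring

end Lspace

theorem Submodule.finrank_add_finrank_le_of_le_ker_of_le_map {K V W : Type*} [DivisionRing K]
    [AddCommGroup V] [Module K V] [AddCommGroup W] [Module K W] (f : V →ₗ[K] W)
    {p A : Submodule K V} {B : Submodule K W} [FiniteDimensional K p]
    (hAp : A ≤ p) (hAf : A ≤ LinearMap.ker f) (hB : B ≤ p.map f) :
    Module.finrank K A + Module.finrank K B ≤ Module.finrank K p := by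
  set g := f.domRestrict p
  have hA : Module.finrank K A ≤ Module.finrank K (LinearMap.ker g) := by
    rw [← (comapSubtypeEquivOfLe hAp).finrank_eq]
    exact finrank_mono fun x hx => hAf hx
  have hB : Module.finrank K B ≤ Module.finrank K (LinearMap.range g) := by
    rw [LinearMap.range_domRestrict]
    exact finrank_mono hB
  have := g.finrank_range_add_finrank_ker
  omega

/-- Recursion inequality for the spaces `L^ℓ(a,b)`:
`dim L^ℓ(a,b) ≥ dim L^ℓ(a-1,b) + dim L^ℓ(a,b-1)` whenever `0 < a - b < ℓ`, `b > 0`. -/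
theorem Lspace_dim_recursion
    (l a b : ℕ) (hb : 0 < b) (hba : b < a) (hl : a - b < l) :
    Module.finrank ℂ (Lspace l (a - 1) b) + Module.finrank ℂ (Lspace l a (b - 1)) ≤
      Module.finrank ℂ (Lspace l a b) := by
  obtain ⟨a, rfl⟩ : ∃ a', a = a' + 1 := ⟨a - 1, by omega⟩
  obtain ⟨b, rfl⟩ : ∃ b', b = b' + 1 := ⟨b - 1, by omega⟩
  show Module.finrank ℂ (Lspace l a (b + 1)) + Module.finrank ℂ (Lspace l (a + 1) b) ≤ _
  refine Submodule.finrank_add_finrank_le_of_le_ker_of_le_map (pderiv (a + 1 + b)).toLinearMap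
    (Lspace_le_Lspace_add_one_left (by omega) (by omega)) ?_ (Lspace_le_map_pderiv (by omega))
  rw [add_right_comm, add_assoc]
  exact Lspace_le_ker_pderiv l a (b + 1)

end
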